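/- Let μ ∈ ℝ, 0 < β₊ < 1, 0 < β₋ < 1, α₊ ≥ 0, α₋ ≥ 0, λ₊ > 0, λ₋ > 0, and define the Lévy density v : ℝ → ℝ by v(x) = α₊·e^{−λ₊x}·x^{−1−β₊} for x > 0, v(x) = α₋·e^{−λ₋|x|}·|x|^{−1−β₋} for x < 0, and v(0) = 0. Then for every real ξ the function x ↦ (e^{ixξ} − 1)·v(x) is integrable on ℝ, and iμξ + ∫_ℝ (e^{ixξ} − 1)·v(x) dx = Ψ(ξ), where Ψ is the GTS characteristic exponent Ψ(ξ) = iμξ + α₊·Γ(−β₊)·((λ₊ − iξ)^{β₊} − λ₊^{β₊}) + α₋·Γ(−β₋)·((λ₋ + iξ)^{β₋} − λ₋^{β₋}). -/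

import Mathlib

open MeasureTheory Set
open Complex Filter Topology

/-!
Splitting `ℝ` at `0` and reflecting the negative half-line, each half contributes
`α ∫₀^∞ (e^{iξt} - 1) e^{-λt} t^{-1-β} dt = α (H(λ - iξ) - H(λ))`, where
`H(z) = ∫₀^∞ (e^{-zt} - 1) t^{-1-β} dt` converges for `Re z ≥ 0` because
`|e^{-zt} - 1| ≤ min (|z| t) 2`. Integrating by parts against `t^{-β}` gives
`β H(z) = -z ∫₀^∞ t^{-β} e^{-zt} dt`, and this Laplace transform equals `Γ(1-β) z^{β-1}` on
`Re z > 0`: both sides are holomorphic there and agree on the positive reals by the Gamma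
integral. Since `Γ(1-β) = -β Γ(-β)`, `H(z) = Γ(-β) z^β`.
-/

theorem Complex.norm_exp_sub_one_le_of_re_nonpos {w : ℂ} (hw : w.re ≤ 0) :
    ‖cexp w - 1‖ ≤ ‖w‖ := by
  have h := (convex_halfSpace_re_le 0).norm_image_sub_le_of_norm_deriv_le (x := 0) (y := w)
    (fun z _ => differentiableAt_exp) (fun z hz => ?_) (by simp) hw (C := 1)
  · simpa using h
  · rw [Complex.deriv_exp, norm_exp, Real.exp_le_one_iff]
    exact hz

theorem norm_cexp_neg_mul_sub_one_le {z : ℂ} (hz : 0 ≤ z.re) {t : ℝ} (ht : 0 ≤ t) :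
    ‖cexp (-(z * t)) - 1‖ ≤ min (‖z‖ * t) 2 := by
  have hre : (-(z * t)).re ≤ 0 := by simpa using mul_nonneg hz ht
  refine le_min ?_ ?_
  · simpa [abs_of_nonneg ht] using norm_exp_sub_one_le_of_re_nonpos hre
  · calc ‖cexp (-(z * t)) - 1‖ ≤ ‖cexp (-(z * t))‖ + ‖(1 : ℂ)‖ := norm_sub_le _ _
      _ ≤ 1 + 1 := by
        gcongr
        · rwa [norm_exp, Real.exp_le_one_iff]
        · simp
      _ = 2 := by norm_num

theorem norm_ofReal_cpow_mul_cexp_neg_mul (a z : ℂ) {t : ℝ} (ht : 0 < t) :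
    ‖(t : ℂ) ^ a * cexp (-(z * t))‖ = t ^ a.re * Real.exp (-(z.re * t)) := by
  rw [norm_mul, norm_cpow_eq_rpow_re_of_pos ht, norm_exp]
  simp

theorem integrableOn_cpow_mul_cexp_neg_mul {a z : ℂ} (ha : -1 < a.re) (hz : 0 < z.re) :
    IntegrableOn (fun t : ℝ => (t : ℂ) ^ a * cexp (-(z * t))) (Ioi 0) := by
  have hbound : IntegrableOn (fun t : ℝ => t ^ a.re * Real.exp (-(z.re * t))) (Ioi 0) := by
    simpa using integrableOn_rpow_mul_exp_neg_mul_rpow ha one_pos hz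
  refine hbound.mono' ?_ ?_
  · refine ContinuousOn.aestronglyMeasurable (fun t ht => ?_) measurableSet_Ioi
    exact ((continuousAt_ofReal_cpow_const _ _ (Or.inr (ne_of_gt ht))).mul
      (by fun_prop)).continuousWithinAt
  · filter_upwards [ae_restrict_mem measurableSet_Ioi] with t ht
    rw [norm_ofReal_cpow_mul_cexp_neg_mul a z ht]

theorem hasDerivAt_cpow_sub_one_mul_cexp_neg_mul (a z : ℂ) {t : ℝ} (ht : 0 < t) :
    HasDerivAt (fun z : ℂ => (t : ℂ) ^ (a - 1) * cexp (-(z * t)))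
      (-((t : ℂ) ^ a * cexp (-(z * t)))) z := by
  have ht' : (t : ℂ) ≠ 0 := ofReal_ne_zero.mpr ht.ne'
  have h : HasDerivAt (fun z : ℂ => -(z * t)) (-t) z := by
    simpa using ((hasDerivAt_id z).mul_const (t : ℂ)).fun_neg
  refine (h.cexp.const_mul ((t : ℂ) ^ (a - 1))).congr_deriv ?_
  rw [cpow_sub _ _ ht', cpow_one]
  field_simp

theorem differentiableOn_integral_cpow_mul_cexp_neg_mul {a : ℂ} (ha : 0 < a.re) :
    DifferentiableOn ℂ (fun z : ℂ => ∫ t in Ioi (0 : ℝ), (t : ℂ) ^ (a - 1) * cexp (-(z * t)))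
      {z | 0 < z.re} := by
  intro z₀ hz₀
  set ε := z₀.re / 2
  have hε : 0 < ε := half_pos hz₀
  have ha' : -1 < (a - 1).re := by simpa using ha
  have hs : {z : ℂ | ε < z.re} ∈ 𝓝 z₀ :=
    (isOpen_lt continuous_const continuous_re).mem_nhds (show ε < z₀.re from half_lt_self hz₀)
  have hbound : IntegrableOn (fun t : ℝ => t ^ a.re * Real.exp (-(ε * t))) (Ioi 0) := by
    simpa using integrableOn_rpow_mul_exp_neg_mul_rpow (by linarith) one_pos hε
  refine (hasDerivAt_integral_of_dominated_loc_of_deriv_le (μ := volume.restrict (Ioi (0 : ℝ)))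
    (F := fun z (t : ℝ) => (t : ℂ) ^ (a - 1) * cexp (-(z * t)))
    (F' := fun z (t : ℝ) => -((t : ℂ) ^ a * cexp (-(z * t)))) hs ?_
    (integrableOn_cpow_mul_cexp_neg_mul ha' hz₀)
    (integrableOn_cpow_mul_cexp_neg_mul (by linarith) hz₀).neg.aestronglyMeasurable
    ?_ hbound ?_).2.differentiableAt.differentiableWithinAt
  · filter_upwards [hs] with z hz
    exact (integrableOn_cpow_mul_cexp_neg_mul ha' (hε.trans hz)).aestronglyMeasurable
  · filter_upwards [ae_restrict_mem measurableSet_Ioi] with t ht z hz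
    rw [norm_neg, norm_ofReal_cpow_mul_cexp_neg_mul a z ht]
    have ht : 0 < t := ht
    gcongr
  · filter_upwards [ae_restrict_mem measurableSet_Ioi] with t ht z _
    exact hasDerivAt_cpow_sub_one_mul_cexp_neg_mul a z ht

theorem Complex.eqOn_re_pos_of_forall_ofReal_eq {f g : ℂ → ℂ}
    (hf : DifferentiableOn ℂ f {z | 0 < z.re}) (hg : DifferentiableOn ℂ g {z | 0 < z.re})
    (hfg : ∀ r : ℝ, 0 < r → f r = g r) : EqOn f g {z | 0 < z.re} := by
  have hU : IsOpen {z : ℂ | 0 < z.re} := isOpen_lt continuous_const continuous_re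
  refine (hf.analyticOnNhd hU).eqOn_of_preconnected_of_frequently_eq (hg.analyticOnNhd hU)
    (convex_halfSpace_re_gt 0).isPreconnected (z₀ := 1) (by simp) ?_
  have hreal : Tendsto ((↑) : ℝ → ℂ) (𝓝[≠] 1) (𝓝[≠] 1) := by
    refine tendsto_nhdsWithin_iff.mpr ⟨?_, eventually_nhdsWithin_of_forall fun r hr => ?_⟩
    · simpa using (continuous_ofReal.tendsto 1).mono_left nhdsWithin_le_nhds
    · simpa using hr
  refine hreal.frequently (Eventually.frequently ?_)
  filter_upwards [nhdsWithin_le_nhds (eventually_gt_nhds one_pos)] with r hr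
  exact hfg r hr

theorem integral_cpow_mul_cexp_neg_mul_Ioi {a z : ℂ} (ha : 0 < a.re) (hz : 0 < z.re) :
    ∫ t in Ioi (0 : ℝ), (t : ℂ) ^ (a - 1) * cexp (-(z * t)) = (1 / z) ^ a * Gamma a := by
  refine eqOn_re_pos_of_forall_ofReal_eq (g := fun w => (1 / w) ^ a * Gamma a)
    (differentiableOn_integral_cpow_mul_cexp_neg_mul ha)
    (fun w hw => ?_) (fun r hr => integral_cpow_mul_exp_neg_mul_Ioi ha hr) hz
  have hw0 : w ≠ 0 := fun h => by simp [h] at hw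
  have hw' : 0 < (1 / w).re := by
    rw [one_div, inv_re]
    exact div_pos hw (normSq_pos.mpr hw0)
  exact (((differentiableAt_const _).div differentiableAt_id hw0).cpow_const
    (mem_slitPlane_iff.mpr (Or.inl hw'))).mul_const _ |>.differentiableWithinAt

theorem norm_cexp_neg_mul_sub_one_mul_rpow_le {z : ℂ} (hz : 0 ≤ z.re) {t : ℝ} (ht : 0 ≤ t)
    (p : ℝ) : ‖(cexp (-(z * t)) - 1) * ((t ^ p : ℝ) : ℂ)‖ ≤ min (‖z‖ * t) 2 * t ^ p := by
  rw [norm_mul, norm_real, Real.norm_of_nonneg (Real.rpow_nonneg ht p)]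
  exact mul_le_mul_of_nonneg_right (norm_cexp_neg_mul_sub_one_le hz ht) (Real.rpow_nonneg ht p)

theorem integrableOn_cexp_neg_mul_sub_one_mul_rpow {z : ℂ} (hz : 0 ≤ z.re) {p : ℝ}
    (hp₁ : -2 < p) (hp₂ : p < -1) :
    IntegrableOn (fun t : ℝ => (cexp (-(z * t)) - 1) * ((t ^ p : ℝ) : ℂ)) (Ioi 0) := by
  have hmeas : ∀ s ⊆ Ioi (0 : ℝ), MeasurableSet s →
      AEStronglyMeasurable (fun t : ℝ => (cexp (-(z * t)) - 1) * ((t ^ p : ℝ) : ℂ))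
        (volume.restrict s) := fun s hs hsm =>
    ContinuousOn.aestronglyMeasurable (fun t ht => (Continuous.continuousAt (by fun_prop)).mul
      (continuous_ofReal.continuousAt.comp (Real.continuousAt_rpow_const t p
        (Or.inl (ne_of_gt (hs ht))))) |>.continuousWithinAt) hsm
  rw [← Ioc_union_Ioi_eq_Ioi zero_le_one]
  refine IntegrableOn.union ?_ ?_
  · have hbound : IntegrableOn (fun t : ℝ => ‖z‖ * t ^ (p + 1)) (Ioc 0 1) :=
      ((intervalIntegrable_iff_integrableOn_Ioc_of_le zero_le_one).mp
        (intervalIntegral.intervalIntegrable_rpow' (by linarith))).const_mul _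
    refine hbound.mono' (hmeas _ Ioc_subset_Ioi_self measurableSet_Ioc) ?_
    filter_upwards [ae_restrict_mem measurableSet_Ioc] with t ht
    calc _ ≤ min (‖z‖ * t) 2 * t ^ p := norm_cexp_neg_mul_sub_one_mul_rpow_le hz ht.1.le p
      _ ≤ ‖z‖ * t * t ^ p :=
          mul_le_mul_of_nonneg_right (min_le_left _ _) (Real.rpow_nonneg ht.1.le p)
      _ = ‖z‖ * t ^ (p + 1) := by rw [Real.rpow_add_one ht.1.ne']; ring
  · have hbound : IntegrableOn (fun t : ℝ => 2 * t ^ p) (Ioi 1) :=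
      (integrableOn_Ioi_rpow_of_lt hp₂ one_pos).const_mul 2
    refine hbound.mono' (hmeas _ (Ioi_subset_Ioi zero_le_one) measurableSet_Ioi) ?_
    filter_upwards [ae_restrict_mem measurableSet_Ioi] with t ht
    calc _ ≤ min (‖z‖ * t) 2 * t ^ p :=
          norm_cexp_neg_mul_sub_one_mul_rpow_le hz (zero_le_one.trans ht.out.le) p
      _ ≤ 2 * t ^ p :=
          mul_le_mul_of_nonneg_right (min_le_right _ _) (Real.rpow_nonneg (by linarith [ht.out]) p)

theorem Complex.mul_one_div_cpow_one_sub {z : ℂ} (hz : 0 < z.re) (b : ℂ) :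
    z * (1 / z) ^ (1 - b) = z ^ b := by
  have hz0 : z ≠ 0 := fun h => by simp [h] at hz
  have harg : z.arg ≠ Real.pi := fun h => by linarith [(arg_eq_pi_iff.mp h).1]
  rw [one_div, inv_cpow _ _ harg, cpow_sub _ _ hz0, cpow_one]
  field_simp

theorem hasDerivAt_cexp_neg_mul_sub_one_mul_rpow (z : ℂ) (p : ℝ) {t : ℝ} (ht : 0 < t) :
    HasDerivAt (fun t : ℝ => (cexp (-(z * t)) - 1) * ((t ^ p : ℝ) : ℂ))
      (-z * (((t ^ p : ℝ) : ℂ) * cexp (-(z * t)))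
        + p * ((cexp (-(z * t)) - 1) * ((t ^ (p - 1) : ℝ) : ℂ))) t := by
  have hlin : HasDerivAt (fun w : ℂ => -(z * w)) (-z) t := by
    simpa using ((hasDerivAt_id (t : ℂ)).const_mul z).fun_neg
  refine ((hlin.comp_ofReal.cexp.sub_const 1).mul
    (Real.hasDerivAt_rpow_const (p := p) (Or.inl ht.ne')).ofReal_comp).congr_deriv ?_
  push_cast
  ring

theorem continuousWithinAt_cexp_neg_mul_sub_one_mul_rpow {z : ℂ} (hz : 0 ≤ z.re) {p : ℝ}
    (hp : -1 < p) :
    ContinuousWithinAt (fun t : ℝ => (cexp (-(z * t)) - 1) * ((t ^ p : ℝ) : ℂ)) (Ici 0) 0 := by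
  have hpow : Tendsto (fun t : ℝ => ‖z‖ * t ^ (p + 1)) (𝓝[Ici 0] 0) (𝓝 0) := by
    have := ((Real.continuousAt_rpow_const 0 (p + 1) (Or.inr (by linarith))).const_mul
      ‖z‖).tendsto.mono_left (nhdsWithin_le_nhds (s := Ici 0))
    simpa [Real.zero_rpow (by linarith : p + 1 ≠ 0)] using this
  have h0 : (cexp (-(z * (0 : ℝ))) - 1) * (((0 : ℝ) ^ p : ℝ) : ℂ) = 0 := by simp
  rw [ContinuousWithinAt, h0]
  refine squeeze_zero_norm' ?_ hpow
  filter_upwards [self_mem_nhdsWithin] with t (ht : 0 ≤ t)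
  calc _ ≤ min (‖z‖ * t) 2 * t ^ p := norm_cexp_neg_mul_sub_one_mul_rpow_le hz ht p
    _ ≤ ‖z‖ * t * t ^ p := mul_le_mul_of_nonneg_right (min_le_left _ _) (Real.rpow_nonneg ht p)
    _ = ‖z‖ * t ^ (p + 1) := by
      rw [add_comm, Real.rpow_add' ht (by linarith), Real.rpow_one, mul_assoc]

theorem tendsto_cexp_neg_mul_sub_one_mul_rpow_atTop {z : ℂ} (hz : 0 ≤ z.re) {p : ℝ}
    (hp : p < 0) :
    Tendsto (fun t : ℝ => (cexp (-(z * t)) - 1) * ((t ^ p : ℝ) : ℂ)) atTop (𝓝 0) := by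
  refine squeeze_zero_norm' ?_
    (by simpa using (tendsto_rpow_neg_atTop (neg_pos.mpr hp)).const_mul 2)
  filter_upwards [eventually_ge_atTop 0] with t ht
  calc _ ≤ min (‖z‖ * t) 2 * t ^ p := norm_cexp_neg_mul_sub_one_mul_rpow_le hz ht p
    _ ≤ 2 * t ^ p := mul_le_mul_of_nonneg_right (min_le_right _ _) (Real.rpow_nonneg ht p)

theorem ofReal_rpow_mul_cexp_neg_mul_eqOn (a : ℝ) (z : ℂ) :
    EqOn (fun t : ℝ => ((t ^ a : ℝ) : ℂ) * cexp (-(z * t)))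
      (fun t : ℝ => (t : ℂ) ^ (((a + 1 : ℝ) : ℂ) - 1) * cexp (-(z * t))) (Ioi 0) := by
  intro t ht
  simp only [ofReal_cpow (le_of_lt ht), ofReal_add, ofReal_one, add_sub_cancel_right]

theorem integrableOn_rpow_mul_cexp_neg_mul {a : ℝ} (ha : -1 < a) {z : ℂ} (hz : 0 < z.re) :
    IntegrableOn (fun t : ℝ => ((t ^ a : ℝ) : ℂ) * cexp (-(z * t))) (Ioi 0) :=
  (integrableOn_cpow_mul_cexp_neg_mul (by simpa using ha) hz).congr_fun
    (ofReal_rpow_mul_cexp_neg_mul_eqOn a z).symm measurableSet_Ioi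

theorem integral_rpow_mul_cexp_neg_mul_Ioi {a : ℝ} (ha : -1 < a) {z : ℂ} (hz : 0 < z.re) :
    ∫ t in Ioi (0 : ℝ), ((t ^ a : ℝ) : ℂ) * cexp (-(z * t))
      = (1 / z) ^ ((a + 1 : ℝ) : ℂ) * Real.Gamma (a + 1) := by
  rw [setIntegral_congr_fun measurableSet_Ioi (ofReal_rpow_mul_cexp_neg_mul_eqOn a z),
    integral_cpow_mul_cexp_neg_mul_Ioi (by rw [ofReal_re]; linarith) hz, Gamma_ofReal]

theorem integral_cexp_neg_mul_sub_one_mul_rpow {β : ℝ} (hβ0 : 0 < β) (hβ1 : β < 1) {z : ℂ}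
    (hz : 0 < z.re) :
    ∫ t in Ioi (0 : ℝ), (cexp (-(z * t)) - 1) * ((t ^ (-1 - β) : ℝ) : ℂ)
      = Real.Gamma (-β) * z ^ (β : ℂ) := by
  have hint₁ := integrableOn_rpow_mul_cexp_neg_mul (a := -β) (by linarith) hz
  have hint₂ := integrableOn_cexp_neg_mul_sub_one_mul_rpow hz.le (p := -1 - β)
    (by linarith) (by linarith)
  have hderiv : ∀ t ∈ Ioi (0 : ℝ),
      HasDerivAt (fun t : ℝ => (cexp (-(z * t)) - 1) * ((t ^ (-β) : ℝ) : ℂ))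
        (-z * (((t ^ (-β) : ℝ) : ℂ) * cexp (-(z * t)))
          + -β * ((cexp (-(z * t)) - 1) * ((t ^ (-1 - β) : ℝ) : ℂ))) t := fun t ht => by
    have h := hasDerivAt_cexp_neg_mul_sub_one_mul_rpow z (-β) ht
    rwa [show -β - 1 = -1 - β by ring, ofReal_neg] at h
  have hparts := integral_Ioi_of_hasDerivAt_of_tendsto
    (continuousWithinAt_cexp_neg_mul_sub_one_mul_rpow hz.le (by linarith)) hderiv
    ((hint₁.const_mul (-z)).add (hint₂.const_mul (-β : ℂ)))
    (tendsto_cexp_neg_mul_sub_one_mul_rpow_atTop hz.le (by linarith))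
  rw [integral_add (hint₁.const_mul _) (hint₂.const_mul _), integral_const_mul,
    integral_const_mul, integral_rpow_mul_cexp_neg_mul_Ioi (by linarith) hz,
    Real.Gamma_add_one (neg_ne_zero.mpr hβ0.ne')] at hparts
  simp only [ofReal_zero, mul_zero, neg_zero, exp_zero, sub_self, zero_mul] at hparts
  refine mul_left_cancel₀ (ofReal_ne_zero.mpr hβ0.ne') ?_
  push_cast [neg_add_eq_sub] at hparts
  linear_combination -hparts + β * Real.Gamma (-β) * mul_one_div_cpow_one_sub hz β

theorem cexp_I_mul_sub_one_mul_exp_neg_mul_rpow_eq (l ξ p t : ℝ) :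
    (cexp (I * t * ξ) - 1) * ((Real.exp (-l * t) * t ^ p : ℝ) : ℂ)
      = (cexp (-((l - I * ξ) * t)) - 1) * ((t ^ p : ℝ) : ℂ)
        - (cexp (-(l * t)) - 1) * ((t ^ p : ℝ) : ℂ) := by
  have h : cexp (I * t * ξ) * cexp (-(l * t)) = cexp (-((l - I * ξ) * t)) := by
    rw [← exp_add]; ring_nf
  push_cast [neg_mul]
  linear_combination ((t ^ p : ℝ) : ℂ) * h

theorem integrableOn_cexp_I_mul_sub_one_mul_exp_neg_mul_rpow {l : ℝ} (hl : 0 < l) (ξ : ℝ) {p : ℝ}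
    (hp₁ : -2 < p) (hp₂ : p < -1) :
    IntegrableOn (fun t : ℝ => (cexp (I * t * ξ) - 1) * ((Real.exp (-l * t) * t ^ p : ℝ) : ℂ))
      (Ioi 0) := by
  simp_rw [cexp_I_mul_sub_one_mul_exp_neg_mul_rpow_eq]
  exact (integrableOn_cexp_neg_mul_sub_one_mul_rpow (by simpa using hl.le) hp₁ hp₂).sub
    (integrableOn_cexp_neg_mul_sub_one_mul_rpow (by simpa using hl.le) hp₁ hp₂)

theorem integral_cexp_I_mul_sub_one_mul_exp_neg_mul_rpow {β : ℝ} (hβ0 : 0 < β) (hβ1 : β < 1)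
    {l : ℝ} (hl : 0 < l) (ξ : ℝ) :
    ∫ t in Ioi (0 : ℝ), (cexp (I * t * ξ) - 1) * ((Real.exp (-l * t) * t ^ (-1 - β) : ℝ) : ℂ)
      = Real.Gamma (-β) * ((l - I * ξ) ^ (β : ℂ) - (l : ℂ) ^ (β : ℂ)) := by
  have hz : 0 < ((l : ℂ) - I * ξ).re := by simpa using hl
  simp_rw [cexp_I_mul_sub_one_mul_exp_neg_mul_rpow_eq]
  rw [integral_sub (integrableOn_cexp_neg_mul_sub_one_mul_rpow hz.le (by linarith) (by linarith))
    (integrableOn_cexp_neg_mul_sub_one_mul_rpow (by simpa using hl.le) (by linarith)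
      (by linarith)), integral_cexp_neg_mul_sub_one_mul_rpow hβ0 hβ1 hz,
    integral_cexp_neg_mul_sub_one_mul_rpow hβ0 hβ1 (by simpa using hl), mul_sub]

theorem integrable_of_integrableOn_Ioi_of_integrableOn_Ioi_comp_neg {E : Type*}
    [NormedAddCommGroup E] {f : ℝ → E} (hIoi : IntegrableOn f (Ioi 0))
    (hIoi_neg : IntegrableOn (fun t => f (-t)) (Ioi 0)) : Integrable f := by
  have hIio : IntegrableOn f (Iio 0) := by
    have := ((Measure.measurePreserving_neg volume).integrableOn_comp_preimage
      (Homeomorph.neg ℝ).measurableEmbedding (s := Ioi 0)).mpr hIoi_neg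
    simpa [Function.comp_def] using this
  rw [← integrableOn_univ, ← Iic_union_Ioi (a := (0 : ℝ))]
  exact ((integrableOn_Iic_iff_integrableOn_Iio).mpr hIio).union hIoi

theorem integral_eq_integral_Ioi_add_integral_Ioi_comp_neg {E : Type*}
    [NormedAddCommGroup E] [NormedSpace ℝ E] {f : ℝ → E} (hIoi : IntegrableOn f (Ioi 0))
    (hIoi_neg : IntegrableOn (fun t => f (-t)) (Ioi 0)) :
    ∫ x, f x = (∫ x in Ioi 0, f x) + ∫ x in Ioi 0, f (-x) := by
  have hIic : IntegrableOn f (Iic 0) :=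
    (integrable_of_integrableOn_Ioi_of_integrableOn_Ioi_comp_neg hIoi hIoi_neg).integrableOn
  rw [← intervalIntegral.integral_Iic_add_Ioi hIic hIoi, integral_comp_neg_Ioi, neg_zero, add_comm]

theorem gts_levy_khintchine_general (μ βp βm αp αm lp lm : ℝ)
    (hβp0 : 0 < βp) (hβp1 : βp < 1) (hβm0 : 0 < βm) (hβm1 : βm < 1)
    (hlp : 0 < lp) (hlm : 0 < lm)
    (v : ℝ → ℝ)
    (hv_pos : ∀ x : ℝ, 0 < x → v x = αp * Real.exp (-lp * x) * x ^ (-1 - βp))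
    (hv_neg : ∀ x : ℝ, x < 0 → v x = αm * Real.exp (-lm * |x|) * |x| ^ (-1 - βm))
    (Ψ : ℝ → ℂ)
    (hΨ : ∀ ξ : ℝ, Ψ ξ = Complex.I * μ * ξ
        + αp * Real.Gamma (-βp)
            * (((lp : ℂ) - Complex.I * ξ) ^ (βp : ℂ) - (lp : ℂ) ^ (βp : ℂ))
        + αm * Real.Gamma (-βm)
            * (((lm : ℂ) + Complex.I * ξ) ^ (βm : ℂ) - (lm : ℂ) ^ (βm : ℂ)))
    (ξ : ℝ) :
    Integrable (fun x : ℝ => (Complex.exp (Complex.I * x * ξ) - 1) * (v x : ℂ)) ∧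
      Complex.I * μ * ξ + ∫ x : ℝ, (Complex.exp (Complex.I * x * ξ) - 1) * (v x : ℂ)
        = Ψ ξ := by
  set f : ℝ → ℂ := fun x => (cexp (I * x * ξ) - 1) * (v x : ℂ)
  have hpos : EqOn f (fun t => αp * ((cexp (I * t * ξ) - 1)
      * ((Real.exp (-lp * t) * t ^ (-1 - βp) : ℝ) : ℂ))) (Ioi 0) := fun t ht => by
    simp only [f, hv_pos t ht]
    push_cast
    ring
  have hneg : EqOn (fun t => f (-t)) (fun t => αm * ((cexp (I * t * ↑(-ξ)) - 1)
      * ((Real.exp (-lm * t) * t ^ (-1 - βm) : ℝ) : ℂ))) (Ioi 0) := fun t ht => by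
    simp only [f, hv_neg (-t) (neg_neg_of_pos ht), abs_neg, abs_of_pos (show 0 < t from ht)]
    push_cast
    ring_nf
  have hIoi : IntegrableOn f (Ioi 0) := IntegrableOn.congr_fun
    ((integrableOn_cexp_I_mul_sub_one_mul_exp_neg_mul_rpow hlp ξ (p := -1 - βp) (by linarith)
      (by linarith)).const_mul _) hpos.symm measurableSet_Ioi
  have hIoi_neg : IntegrableOn (fun t => f (-t)) (Ioi 0) := IntegrableOn.congr_fun
    ((integrableOn_cexp_I_mul_sub_one_mul_exp_neg_mul_rpow hlm (-ξ) (p := -1 - βm) (by linarith)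
      (by linarith)).const_mul _) hneg.symm measurableSet_Ioi
  refine ⟨integrable_of_integrableOn_Ioi_of_integrableOn_Ioi_comp_neg hIoi hIoi_neg, ?_⟩
  rw [integral_eq_integral_Ioi_add_integral_Ioi_comp_neg hIoi hIoi_neg,
    setIntegral_congr_fun measurableSet_Ioi hpos, setIntegral_congr_fun measurableSet_Ioi hneg,
    integral_const_mul, integral_const_mul,
    integral_cexp_I_mul_sub_one_mul_exp_neg_mul_rpow hβp0 hβp1 hlp,
    integral_cexp_I_mul_sub_one_mul_exp_neg_mul_rpow hβm0 hβm1 hlm, hΨ]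
  push_cast
  ring_nf

/-- The Lévy–Khintchine representation of the GTS characteristic exponent:
for the GTS Lévy density `v`, the function `x ↦ (e^{ixξ} − 1)·v(x)` is integrable on `ℝ` and
`iμξ + ∫ (e^{ixξ} − 1)·v(x) dx = Ψ(ξ)`. -/
theorem gts_levy_khintchine (μ βp βm αp αm lp lm : ℝ)
    (hβp0 : 0 < βp) (hβp1 : βp < 1) (hβm0 : 0 < βm) (hβm1 : βm < 1)
    (hαp : 0 ≤ αp) (hαm : 0 ≤ αm) (hlp : 0 < lp) (hlm : 0 < lm)
    (v : ℝ → ℝ)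
    (hv_pos : ∀ x : ℝ, 0 < x → v x = αp * Real.exp (-lp * x) * x ^ (-1 - βp))
    (hv_neg : ∀ x : ℝ, x < 0 → v x = αm * Real.exp (-lm * |x|) * |x| ^ (-1 - βm))
    (hv_zero : v 0 = 0)
    (Ψ : ℝ → ℂ)
    (hΨ : ∀ ξ : ℝ, Ψ ξ = Complex.I * μ * ξ
        + αp * Real.Gamma (-βp)
            * (((lp : ℂ) - Complex.I * ξ) ^ (βp : ℂ) - (lp : ℂ) ^ (βp : ℂ))
        + αm * Real.Gamma (-βm)
            * (((lm : ℂ) + Complex.I * ξ) ^ (βm : ℂ) - (lm : ℂ) ^ (βm : ℂ)))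
    (ξ : ℝ) :
    Integrable (fun x : ℝ => (Complex.exp (Complex.I * x * ξ) - 1) * (v x : ℂ)) ∧
      Complex.I * μ * ξ + ∫ x : ℝ, (Complex.exp (Complex.I * x * ξ) - 1) * (v x : ℂ)
        = Ψ ξ :=
  gts_levy_khintchine_general μ βp βm αp αm lp lm hβp0 hβp1 hβm0 hβm1 hlp hlm v hv_pos hv_neg Ψ hΨ ξ
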